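/- arXiv:1004.3342 — 2 statements merged into one kernel-verified Lean document; each statement's English description precedes it below -/
import Mathlib

section
/- For all nonstandard a, b ∈ M: a E⁰ b implies a E¹ b; a E¹ b implies a E² b; a E² b implies a E³ b; and a E³ b implies a E⁴ b. -/
/-- `a` is a nonstandard element: above every natural number cast. -/
def Nonstd {M : Type*} [CommSemiring M] [LinearOrder M] [IsStrictOrderedRing M] (a : M) : Prop :=
  ∀ n : ℕ, (n : M) < a

def E0 {M : Type*} [CommSemiring M] [LinearOrder M] [IsStrictOrderedRing M] (a b : M) : Prop :=
  ∃ n : ℕ, a < b + (n : M) ∧ b < a + (n : M)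

def E1 {M : Type*} [CommSemiring M] [LinearOrder M] [IsStrictOrderedRing M] (a b : M) : Prop :=
  ∃ c : M, (∀ n : ℕ, (n : M) * c < a ∧ (n : M) * c < b) ∧ a < b + c ∧ b < a + c

def E2 {M : Type*} [CommSemiring M] [LinearOrder M] [IsStrictOrderedRing M] (a b : M) : Prop :=
  ∃ n : ℕ, a < (n : M) * b ∧ b < (n : M) * a

def E3 {M : Type*} [CommSemiring M] [LinearOrder M] [IsStrictOrderedRing M] (a b : M) : Prop :=
  ∃ c : M, (∀ n : ℕ, c ^ n < a ∧ c ^ n < b) ∧ a < b * c ∧ b < a * c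

def E4 {M : Type*} [CommSemiring M] [LinearOrder M] [IsStrictOrderedRing M] (a b : M) : Prop :=
  ∃ n : ℕ, a < b ^ n ∧ b < a ^ n

/-- `a E⁵ b`: some order automorphism of `M` maps `a` to `b`. -/
def E5 {M : Type*} [CommSemiring M] [LinearOrder M] [IsStrictOrderedRing M] (a b : M) : Prop :=
  ∃ f : M ≃o M, f a = b

/-- `E` is a convex equivalence relation on the nonstandard elements of `M`. -/
def IsConvexEquiv {M : Type*} [CommSemiring M] [LinearOrder M] [IsStrictOrderedRing M] (E : M → M → Prop) : Prop :=
  (∀ a : M, Nonstd a → E a a) ∧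
  (∀ a b : M, Nonstd a → Nonstd b → E a b → E b a) ∧
  (∀ a b c : M, Nonstd a → Nonstd b → Nonstd c → E a b → E b c → E a c) ∧
  (∀ a b c : M, Nonstd a → Nonstd b → Nonstd c → a ≤ b → b ≤ c → E a c → E a b)

/-- An almost `{<,+}`-isomorphism: an order isomorphism whose additivity error is finite. -/
def IsAlmostAddIso {M₁ M₂ : Type*} [CommSemiring M₁] [LinearOrder M₁] [IsStrictOrderedRing M₁]
    [CommSemiring M₂] [LinearOrder M₂] [IsStrictOrderedRing M₂] (f : M₁ ≃o M₂) : Prop :=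
  ∀ a b : M₁, ∃ n : ℕ, f (a + b) < f a + f b + (n : M₂) ∧ f a + f b < f (a + b) + (n : M₂)

/-- `M` is 2-order-rigid. -/
def OrderRigid2 (M : Type*) [CommSemiring M] [LinearOrder M] [IsStrictOrderedRing M] : Prop :=
  ∀ a b : M, Nonstd a → Nonstd b →
    Nonempty ({x : M // x < a} ≃o {x : M // x < b}) → E2 a b

/-- `M` is 3-order-rigid. -/
def OrderRigid3 (M : Type*) [CommSemiring M] [LinearOrder M] [IsStrictOrderedRing M] : Prop :=
  ∀ a b : M, Nonstd a → Nonstd b →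
    Nonempty ({x : M // x < a} ≃o {x : M // x < b}) → E3 a b

/-- `M` is 4-order-rigid. -/
def OrderRigid4 (M : Type*) [CommSemiring M] [LinearOrder M] [IsStrictOrderedRing M] : Prop :=
  ∀ a b : M, Nonstd a → Nonstd b →
    Nonempty ({x : M // x < a} ≃o {x : M // x < b}) → E4 a b

section

variable {M : Type*} [CommSemiring M] [LinearOrder M] [IsStrictOrderedRing M] {a b : M}

theorem Nonstd.pos (ha : Nonstd a) : 0 < a := by
  simpa using ha 0

theorem E1_of_E0 (ha : Nonstd a) (hb : Nonstd b) (h : E0 a b) : E1 a b := by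
  obtain ⟨n, hab, hba⟩ := h
  refine ⟨n, fun m => ⟨?_, ?_⟩, hab, hba⟩
  · simpa only [Nat.cast_mul] using ha (m * n)
  · simpa only [Nat.cast_mul] using hb (m * n)

theorem E2_of_E1 (h : E1 a b) : E2 a b := by
  obtain ⟨c, hc, hab, hba⟩ := h
  obtain ⟨hca, hcb⟩ : c < a ∧ c < b := by simpa using hc 1
  refine ⟨2, ?_, ?_⟩
  · calc a < b + c := hab
      _ ≤ b + b := by gcongr
      _ = ((2 : ℕ) : M) * b := by push_cast; ring
  · calc b < a + c := hba
      _ ≤ a + a := by gcongr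
      _ = ((2 : ℕ) : M) * a := by push_cast; ring

theorem E3_of_E2 (ha : Nonstd a) (hb : Nonstd b) (h : E2 a b) : E3 a b := by
  obtain ⟨n, hab, hba⟩ := h
  have hn : (n : M) ≤ ((n + 1 : ℕ) : M) := by exact_mod_cast n.le_succ
  refine ⟨((n + 1 : ℕ) : M), fun m => ⟨?_, ?_⟩, ?_, ?_⟩
  · simpa only [Nat.cast_pow] using ha ((n + 1) ^ m)
  · simpa only [Nat.cast_pow] using hb ((n + 1) ^ m)
  · calc a < n * b := hab
      _ ≤ (n + 1 : ℕ) * b := by gcongr; exact hb.pos.le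
      _ = b * (n + 1 : ℕ) := mul_comm _ _
  · calc b < n * a := hba
      _ ≤ (n + 1 : ℕ) * a := by gcongr; exact ha.pos.le
      _ = a * (n + 1 : ℕ) := mul_comm _ _

theorem E4_of_E3 (ha : 0 ≤ a) (hb : 0 ≤ b) (h : E3 a b) : E4 a b := by
  obtain ⟨c, hc, hab, hba⟩ := h
  obtain ⟨hca, hcb⟩ : c < a ∧ c < b := by simpa using hc 1
  refine ⟨2, ?_, ?_⟩
  · calc a < b * c := hab
      _ ≤ b * b := by gcongr
      _ = b ^ 2 := (sq b).symm
  · calc b < a * c := hba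
      _ ≤ a * a := by gcongr
      _ = a ^ 2 := (sq a).symm

end

theorem E_chain_general {M : Type*} [CommSemiring M] [LinearOrder M] [IsStrictOrderedRing M]
    (a b : M) (ha : Nonstd a) (hb : Nonstd b) :
    (E0 a b → E1 a b) ∧ (E1 a b → E2 a b) ∧ (E2 a b → E3 a b) ∧ (E3 a b → E4 a b) :=
  ⟨E1_of_E0 ha hb, E2_of_E1, E3_of_E2 ha hb, E4_of_E3 ha.pos.le hb.pos.le⟩

/-- for nonstandard `a, b`, `E⁰ ⊆ E¹ ⊆ E² ⊆ E³ ⊆ E⁴`. -/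
theorem E_chain {M : Type*} [CommSemiring M] [LinearOrder M] [IsStrictOrderedRing M]
    (h0 : ∀ x : M, 0 ≤ x)
    (a b : M) (ha : Nonstd a) (hb : Nonstd b) :
    (E0 a b → E1 a b) ∧ (E1 a b → E2 a b) ∧ (E2 a b → E3 a b) ∧ (E3 a b → E4 a b) :=
  E_chain_general a b ha hb
end

section
/- Let a₁, a₂, b₁, b₂ be nonstandard elements of M. If a₁ E⁵ b₁ and a₂ E⁵ b₂, then (a₁ * a₂) E⁵ (b₁ * b₂); that is, if there are order automorphisms of M mapping a₁ to b₁ and a₂ to b₂, then there is an order automorphism of M mapping a₁ * a₂ to b₁ * b₂. -/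
/-!
By transitivity of `E5` and commutativity, it suffices to show that if `f a = b` for an order
automorphism `f` and `c` is nonstandard, then some order automorphism maps `c * a` to `c * b`.

Call `D ⊆ M` a unit lattice if it meets the `E0`-class (finite-distance class) of every element
in a translate of `ℤ`. Such a `D` can be chosen through `0` and `c`, and division with remainder
then makes `(q, r) ↦ a * q + r` an order isomorphism `D ×ₗ [0, a) ≃o M`. Conjugating
`id ×ₗ f|[0, a)` by these isomorphisms for `a` and for `b` gives an automorphism of `M` sending
`c * a = a * c + 0` to `b * c + f 0 = c * b`.
-/

theorem Setoid.exists_transversal_superset {α : Type*} (s : Setoid α) {S : Set α}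
    (hS : S.Pairwise fun x y => ¬ s x y) :
    ∃ P, S ⊆ P ∧ P.Pairwise (fun x y => ¬ s x y) ∧ ∀ x, ∃ p ∈ P, s x p := by
  classical
  let R : Set α := {x | (∀ t ∈ S, ¬ s x t) ∧ (Quotient.mk s x).out = x}
  refine ⟨S ∪ R, Set.subset_union_left, ?_, fun x => ?_⟩
  · have hR : ∀ x ∈ R, ∀ y ∈ R, s x y → x = y := fun x hx y hy hxy => by
      rw [← hx.2, ← hy.2, Quotient.sound hxy]
    rintro x (hx | hx) y (hy | hy) hne hxy
    · exact hS hx hy hne hxy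
    · exact hy.1 x hx (s.symm hxy)
    · exact hx.1 y hy hxy
    · exact hne (hR x hx y hy hxy)
  · by_cases h : ∃ t ∈ S, s x t
    · obtain ⟨t, ht, hxt⟩ := h
      exact ⟨t, Or.inl ht, hxt⟩
    · push Not at h
      have hxp : s x (Quotient.mk s x).out := s.symm (Quotient.mk_out x)
      refine ⟨_, Or.inr ⟨fun t ht hpt => h t ht (s.trans hxp hpt), ?_⟩, hxp⟩
      rw [Quotient.out_eq]

def OrderIso.restrictIio {α β : Type*} [Preorder α] [Preorder β] (e : α ≃o β) (x : α) :
    Set.Iio x ≃o Set.Iio (e x) where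
  toEquiv := e.toEquiv.subtypeEquiv fun _ => e.lt_iff_lt.symm
  map_rel_iff' := e.le_iff_le

@[simp]
theorem OrderIso.coe_restrictIio_apply {α β : Type*} [Preorder α] [Preorder β] (e : α ≃o β)
    (x : α) (y : Set.Iio x) : (e.restrictIio x y : β) = e y := rfl

section IntDiff

variable {M : Type*} [AddCommMonoidWithOne M]

/-- `x - y ∈ ℤ`, phrased without subtraction. -/
def IntDiff (x y : M) : Prop := ∃ m n : ℕ, x + m = y + n

theorem IntDiff.refl (x : M) : IntDiff x x := ⟨0, 0, rfl⟩

theorem IntDiff.symm {x y : M} : IntDiff x y → IntDiff y x := fun ⟨m, n, h⟩ => ⟨n, m, h.symm⟩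

theorem IntDiff.trans {x y z : M} : IntDiff x y → IntDiff y z → IntDiff x z := by
  rintro ⟨m, n, hxy⟩ ⟨m', n', hyz⟩
  refine ⟨m + m', n' + n, ?_⟩
  push_cast
  calc x + (m + m') = y + n + m' := by rw [← hxy]; ac_rfl
    _ = z + (n' + n) := by rw [add_right_comm, hyz]; ac_rfl

theorem IntDiff.add_nat {x y : M} (h : IntDiff x y) (k : ℕ) : IntDiff (x + k) y := by
  obtain ⟨m, n, h⟩ := h
  exact ⟨m, n + k, by push_cast; rw [add_right_comm, h, add_assoc]⟩

end IntDiff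

section OrderedSemiring

variable {M : Type*} [CommSemiring M] [LinearOrder M] [IsStrictOrderedRing M]

theorem E0.refl (x : M) : E0 x x := ⟨1, by simp, by simp⟩

theorem E0.symm {x y : M} : E0 x y → E0 y x := fun ⟨n, h₁, h₂⟩ => ⟨n, h₂, h₁⟩

theorem E0.trans {x y z : M} : E0 x y → E0 y z → E0 x z := by
  rintro ⟨m, hxy, hyx⟩ ⟨n, hyz, hzy⟩
  refine ⟨m + n, ?_, ?_⟩ <;> push_cast
  · calc x < y + m := hxy
      _ < z + n + m := by gcongr
      _ = z + (m + n) := by ring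
  · calc z < y + n := hzy
      _ < x + m + n := by gcongr
      _ = x + (m + n) := by ring

theorem E0.of_le_add {x y : M} {n : ℕ} (h₁ : x ≤ y + n) (h₂ : y ≤ x + n) : E0 x y :=
  ⟨n + 1, by push_cast; rw [← add_assoc]; exact h₁.trans_lt (lt_add_one _),
    by push_cast; rw [← add_assoc]; exact h₂.trans_lt (lt_add_one _)⟩

variable (M) in
def E0.setoid : Setoid M := ⟨E0, ⟨E0.refl, E0.symm, E0.trans⟩⟩

theorem Nonstd.not_E0_zero {c : M} (hc : Nonstd c) : ¬ E0 c 0 := fun ⟨n, h, _⟩ =>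
  (hc n).not_gt (by simpa using h)

theorem nonstd_of_not_E0_zero {x : M} (h0 : 0 ≤ x) (hx : ¬ E0 x 0) : Nonstd x := by
  intro n
  by_contra! hxn
  exact hx (E0.of_le_add (n := n) (hxn.trans (le_add_of_nonneg_left le_rfl)) (by positivity))

theorem IntDiff.E0 {x y : M} (h : IntDiff x y) : E0 x y := by
  obtain ⟨m, n, h⟩ := h
  refine E0.of_le_add (n := n + m) ?_ ?_ <;> push_cast
  · calc x ≤ x + m := le_add_of_nonneg_right m.cast_nonneg
      _ = y + n := h
      _ ≤ y + (n + m) := by rw [← add_assoc]; exact le_add_of_nonneg_right m.cast_nonneg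
  · calc y ≤ y + n := le_add_of_nonneg_right n.cast_nonneg
      _ = x + m := h.symm
      _ ≤ x + (n + m) := by
        rw [add_comm (n : M), ← add_assoc]; exact le_add_of_nonneg_right n.cast_nonneg

theorem IntDiff.add_one_le_of_lt {x y : M} (h : IntDiff x y) (hxy : x < y) : x + 1 ≤ y := by
  obtain ⟨m, n, h⟩ := h
  rcases le_or_gt m n with hmn | hnm
  · have : x + m < y + n := add_lt_add_of_lt_of_le hxy (by exact_mod_cast hmn)
    exact absurd h this.ne
  · refine le_of_add_le_add_right (a := (n : M)) ?_
    calc x + 1 + n = x + ((n + 1 : ℕ) : M) := by push_cast; ring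
      _ ≤ x + m := by gcongr; exact hnm
      _ = y + n := h

theorem exists_nat_le_lt_add_one {w z : M} {N : ℕ} (hwz : w ≤ z) (hzN : z ≤ w + N) :
    ∃ n : ℕ, w + n ≤ z ∧ z < w + n + 1 := by
  classical
  have hex : ∃ n : ℕ, z < w + n + 1 := ⟨N, hzN.trans_lt (lt_add_one _)⟩
  refine ⟨Nat.find hex, ?_, Nat.find_spec hex⟩
  rcases hn : Nat.find hex with _ | k
  · simpa using hwz
  · have := Nat.find_min hex (show k < Nat.find hex by omega)
    push_cast
    rw [← add_assoc]
    exact not_lt.1 this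

/-- A copy of `ℤ` inside every `E0`-class. Quotients taken in `D` make division with remainder
unique. -/
structure IsUnitLattice (D : Set M) : Prop where
  add_one_mem : ∀ q ∈ D, q + 1 ∈ D
  add_one_le_of_lt : ∀ q ∈ D, ∀ q' ∈ D, q < q' → q + 1 ≤ q'
  exists_mem_le_lt : ∀ z, ∃ q ∈ D, q ≤ z ∧ z < q + 1

theorem E5.trans {a b c : M} : E5 a b → E5 b c → E5 a c :=
  fun ⟨f, hf⟩ ⟨g, hg⟩ => ⟨f.trans g, by simp [hf, hg]⟩

end OrderedSemiring

section Canonical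

variable {M : Type*} [CommSemiring M] [LinearOrder M] [IsStrictOrderedRing M]
  [CanonicallyOrderedAdd M]

theorem exists_intDiff_le_lt_add_one {p z : M} (hzp : E0 z p) (hp : p ≤ z ∨ Nonstd p) :
    ∃ q, IntDiff q p ∧ q ≤ z ∧ z < q + 1 := by
  obtain ⟨N, hzN, hpN⟩ := hzp
  suffices ∃ w, IntDiff w p ∧ w ≤ z ∧ z ≤ w + N by
    obtain ⟨w, hw, hwz, hzw⟩ := this
    obtain ⟨n, hn⟩ := exists_nat_le_lt_add_one hwz hzw
    exact ⟨w + n, hw.add_nat n, hn⟩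
  rcases le_or_gt p z with hpz | hzp
  · exact ⟨p, .refl p, hpz, hzN.le⟩
  · obtain ⟨w, rfl⟩ := exists_add_of_le (hp.resolve_left hzp.not_ge N).le
    rw [add_comm] at hpN hzp
    exact ⟨w, ⟨N, 0, by simp [add_comm]⟩, (lt_of_add_lt_add_right hpN).le, hzp.le⟩

theorem isUnitLattice_of_transversal {P : Set M} (h0P : 0 ∈ P)
    (hP : P.Pairwise fun x y => ¬ E0 x y) (hcover : ∀ z, ∃ p ∈ P, E0 z p) :
    IsUnitLattice {q | ∃ p ∈ P, IntDiff q p} where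
  add_one_mem := fun q ⟨p, hp, hqp⟩ => ⟨p, hp, by simpa using hqp.add_nat 1⟩
  add_one_le_of_lt := by
    rintro q ⟨p, hp, hqp⟩ q' ⟨p', hp', hqp'⟩ hqq'
    obtain rfl | hne := eq_or_ne p p'
    · exact (hqp.trans hqp'.symm).add_one_le_of_lt hqq'
    · by_contra! h
      have hE0 : E0 q q' := E0.of_le_add (n := 1)
        (by simpa using hqq'.le.trans (le_add_of_nonneg_right zero_le_one)) (by simpa using h.le)
      exact hP hp hp' hne ((hqp.E0.symm.trans hE0).trans hqp'.E0)
  exists_mem_le_lt z := by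
    obtain ⟨p, hp, hzp⟩ := hcover z
    have hp' : p ≤ z ∨ Nonstd p := by
      rcases eq_or_ne p 0 with rfl | hp0
      · exact .inl zero_le
      · exact .inr (nonstd_of_not_E0_zero zero_le (hP hp h0P hp0))
    obtain ⟨q, hqp, hq⟩ := exists_intDiff_le_lt_add_one hzp hp'
    exact ⟨q, ⟨p, hp, hqp⟩, hq⟩

theorem exists_isUnitLattice_mem {c : M} (hc : Nonstd c) :
    ∃ D : Set M, IsUnitLattice D ∧ c ∈ D := by
  obtain ⟨P, hSP, hP, hcover⟩ := (E0.setoid M).exists_transversal_superset (S := {0, c})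
    (Set.pairwise_pair.2 fun _ => ⟨fun h => hc.not_E0_zero h.symm, hc.not_E0_zero⟩)
  exact ⟨_, isUnitLattice_of_transversal (hSP (by simp)) hP hcover, c, hSP (by simp), .refl c⟩

namespace IsUnitLattice

variable {D : Set M} (hD : IsUnitLattice D)
include hD

theorem exists_mul_add_eq {a : M} (hdiv : ∀ x, ∃ q r, x = a * q + r ∧ r < a) (x : M) :
    ∃ q ∈ D, ∃ r < a, a * q + r = x := by
  obtain ⟨q₀, r₀, rfl, hr₀⟩ := hdiv x
  obtain ⟨q, hq, hqq₀, hq₀q⟩ := hD.exists_mem_le_lt q₀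
  obtain ⟨t, rfl⟩ := exists_add_of_le hqq₀
  have hat : a * t < a :=
    mul_lt_of_lt_one_right ((zero_le (a := r₀)).trans_lt hr₀) (lt_of_add_lt_add_left hq₀q)
  rcases lt_or_ge (a * t + r₀) a with h | h
  · exact ⟨q, hq, _, h, by ring⟩
  · obtain ⟨r, hr⟩ := exists_add_of_le h
    refine ⟨q + 1, hD.add_one_mem q hq, r, ?_, ?_⟩
    · exact lt_of_add_lt_add_left (hr ▸ add_lt_add hat hr₀)
    · calc a * (q + 1) + r = a * q + (a + r) := by ring
        _ = a * (q + t) + r₀ := by rw [← hr]; ring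

theorem strictMono_mul_add (a : M) :
    StrictMono fun p : D ×ₗ Set.Iio a => a * (ofLex p).1 + (ofLex p).2 := by
  rintro ⟨⟨q, hq⟩, r, hr⟩ ⟨⟨q', hq'⟩, r', hr'⟩ h
  rcases Prod.Lex.lt_iff.1 h with hlt | ⟨heq, hlt⟩
  · calc a * q + r < a * q + a := by gcongr; exact hr
      _ = a * (q + 1) := by ring
      _ ≤ a * q' := mul_le_mul_of_nonneg_left (hD.add_one_le_of_lt q hq q' hq' hlt) zero_le
      _ ≤ a * q' + r' := le_add_of_nonneg_right zero_le
  · simp only at heq hlt ⊢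
    rw [heq]
    gcongr

noncomputable def mulAddOrderIso {a : M} (hdiv : ∀ x, ∃ q r, x = a * q + r ∧ r < a) :
    D ×ₗ Set.Iio a ≃o M :=
  StrictMono.orderIsoOfSurjective _ (hD.strictMono_mul_add a) fun x => by
    obtain ⟨q, hq, r, hr, rfl⟩ := hD.exists_mul_add_eq hdiv x
    exact ⟨toLex (⟨q, hq⟩, ⟨r, hr⟩), rfl⟩

theorem mulAddOrderIso_apply {a : M} (hdiv : ∀ x, ∃ q r, x = a * q + r ∧ r < a)
    (p : D ×ₗ Set.Iio a) : hD.mulAddOrderIso hdiv p = a * (ofLex p).1 + (ofLex p).2 := rfl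

end IsUnitLattice

theorem E5.mul_left (hdiv : ∀ x d : M, d ≠ 0 → ∃ q r, x = d * q + r ∧ r < d) {a b c : M}
    (hc : Nonstd c) (h : E5 a b) : E5 (c * a) (c * b) := by
  obtain ⟨f, rfl⟩ := h
  have hf0 : f 0 = 0 :=
    le_antisymm ((f.monotone (zero_le (a := f.symm 0))).trans_eq (f.apply_symm_apply 0)) zero_le
  rcases (zero_le : 0 ≤ a).eq_or_lt with rfl | ha
  · exact ⟨.refl M, by simp [hf0]⟩
  have hb : 0 < f a := hf0 ▸ f.lt_iff_lt.2 ha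
  obtain ⟨D, hD, hcD⟩ := exists_isUnitLattice_mem hc
  let φ := hD.mulAddOrderIso (hdiv · a ha.ne')
  let ψ := hD.mulAddOrderIso (hdiv · (f a) hb.ne')
  refine ⟨φ.symm.trans ((Prod.Lex.prodLexCongr (.refl D) (f.restrictIio a)).trans ψ), ?_⟩
  have hφ : φ (toLex (⟨c, hcD⟩, ⟨0, ha⟩)) = c * a := by
    simp [φ, IsUnitLattice.mulAddOrderIso_apply, mul_comm]
  rw [← hφ]
  simp [ψ, IsUnitLattice.mulAddOrderIso_apply, hf0, mul_comm]

end Canonical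

theorem E5_mul_general {M : Type*} [CommSemiring M] [LinearOrder M] [IsStrictOrderedRing M]
    (h0 : ∀ x : M, 0 ≤ x)
    (hsub : ∀ a b : M, a ≤ b → ∃ c, b = a + c)
    (hdiv : ∀ a b : M, b ≠ 0 → ∃ q r : M, a = b * q + r ∧ r < b)
    (a₁ a₂ b₁ b₂ : M) (ha₁ : Nonstd a₁)
    (hb₂ : Nonstd b₂)
    (h₁ : E5 a₁ b₁) (h₂ : E5 a₂ b₂) :
    E5 (a₁ * a₂) (b₁ * b₂) := by
  let _ : CanonicallyOrderedAdd M :=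
    { exists_add_of_le := fun h => hsub _ _ h
      le_add_self := fun _ b => le_add_of_nonneg_left (h0 b)
      le_self_add := fun _ b => le_add_of_nonneg_right (h0 b) }
  have h₂₁ := E5.mul_left hdiv hb₂ h₁
  rw [mul_comm b₂, mul_comm b₂] at h₂₁
  exact (E5.mul_left hdiv ha₁ h₂).trans h₂₁

/-- `E⁵` is preserved under multiplication of nonstandard elements. -/
theorem E5_mul {M : Type*} [CommSemiring M] [LinearOrder M] [IsStrictOrderedRing M]
    (h0 : ∀ x : M, 0 ≤ x)
    (hsub : ∀ a b : M, a ≤ b → ∃ c, b = a + c)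
    (hdiv : ∀ a b : M, b ≠ 0 → ∃ q r : M, a = b * q + r ∧ r < b)
    (a₁ a₂ b₁ b₂ : M) (ha₁ : Nonstd a₁) (ha₂ : Nonstd a₂)
    (hb₁ : Nonstd b₁) (hb₂ : Nonstd b₂)
    (h₁ : E5 a₁ b₁) (h₂ : E5 a₂ b₂) :
    E5 (a₁ * a₂) (b₁ * b₂) :=
  E5_mul_general h0 hsub hdiv a₁ a₂ b₁ b₂ ha₁ hb₂ h₁ h₂
end
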